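/- arXiv:1910.08866 — 2 statements merged into one kernel-verified Lean document; each statement's English description precedes it below -/
import Mathlib

section
/- For the sl₂ fusion/Verlinde algebra at level ℓ: with S_{mn} = √(2/(ℓ+2)) sin(πmn/(ℓ+2)) for m,n ∈ {1,…,ℓ+1}, the Verlinde numbers N_{ab}^{c} = ∑_{n=1}^{ℓ+1} S_{an}S_{bn}S_{cn}/S_{1n} satisfy: N_{ab}^{c} = 1 if |a−b|+1 ≤ c ≤ min(a+b−1, 2ℓ+3−a−b) and c ≡ a+b−1 (mod 2), and N_{ab}^{c} = 0 otherwise. -/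
open Real Finset

/-- The `sl₂` level-`ℓ` S-matrix entries, `S_{mn} = √(2/(ℓ+2)) sin(πmn/(ℓ+2))`. -/
noncomputable def sl2Sfun (ℓ : ℕ) (m n : ℕ) : ℝ :=
  Real.sqrt (2 / ((ℓ : ℝ) + 2)) * Real.sin (Real.pi * (m : ℝ) * (n : ℝ) / ((ℓ : ℝ) + 2))

/-- The Verlinde numbers `N_{ab}^c = ∑_{n=1}^{ℓ+1} S_{an}S_{bn}S_{cn}/S_{1n}`. -/
noncomputable def verlindeN (ℓ : ℕ) (a b c : ℕ) : ℝ :=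
  ∑ n ∈ Finset.Icc 1 (ℓ + 1),
    sl2Sfun ℓ a n * sl2Sfun ℓ b n * sl2Sfun ℓ c n / sl2Sfun ℓ 1 n


lemma cos_sum_range (k m : ℕ) (hk : 1 ≤ k) :
    ∑ n ∈ Finset.range k, Real.cos (Real.pi * m * n / k) =
      if 2 * k ∣ m then (k : ℝ) else if 2 ∣ m then 0 else 1 := by
  have hkR : (0:ℝ) < (k:ℝ) := by exact_mod_cast hk
  have hk0 : (k:ℝ) ≠ 0 := ne_of_gt hkR
  by_cases hdvd : 2 * k ∣ m
  · obtain ⟨t, ht⟩ := hdvd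
    rw [if_pos ⟨t, ht⟩]
    have hterm : ∀ n ∈ Finset.range k, Real.cos (Real.pi * m * n / k) = 1 := by
      intro n _
      have harg : Real.pi * m * n / k = (t * n : ℕ) * (2 * Real.pi) := by
        subst ht; push_cast; field_simp
      rw [harg, Real.cos_nat_mul_two_pi]
    rw [Finset.sum_congr rfl hterm]
    simp
  · set x : ℝ := Real.pi * m / k with hx
    set z : ℂ := Complex.exp (x * Complex.I) with hz
    have hzre : ∀ n : ℕ, (z ^ n).re = Real.cos (Real.pi * m * n / k) := by
      intro n
      rw [hz, ← Complex.exp_nat_mul]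
      have h1 : (n : ℂ) * ((x:ℝ) * Complex.I) = ((n * x : ℝ) : ℂ) * Complex.I := by
        push_cast; ring
      rw [h1, Complex.exp_ofReal_mul_I_re]
      congr 1; rw [hx]; ring
    have hz1 : z ≠ 1 := by
      intro h
      rw [hz, Complex.exp_eq_one_iff] at h
      obtain ⟨n, hn⟩ := h
      have hx' : x = n * (2 * Real.pi) := by
        have him := congrArg Complex.im hn
        simpa using him
      have hm : (m:ℝ) * Real.pi = ((2 * k * n : ℤ) : ℝ) * Real.pi := by
        rw [hx] at hx'
        field_simp at hx'
        push_cast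
        linear_combination Real.pi * hx'
      have hm2 : (m:ℝ) = ((2 * k * n : ℤ) : ℝ) := mul_right_cancel₀ Real.pi_ne_zero hm
      have hm3 : (m:ℤ) = 2 * k * n := by exact_mod_cast hm2
      apply hdvd
      have : ((2*k : ℕ) : ℤ) ∣ (m:ℤ) := ⟨n, by push_cast; linarith [hm3]⟩
      exact_mod_cast this
    have hre : (∑ n ∈ Finset.range k, z ^ n).re
        = ∑ n ∈ Finset.range k, Real.cos (Real.pi * m * n / k) := by
      rw [Complex.re_sum]
      exact Finset.sum_congr rfl fun n _ => hzre n
    have hsum : ∑ n ∈ Finset.range k, z ^ n = (z ^ k - 1) / (z - 1) := geom_sum_eq hz1 k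
    have hzk : z ^ k = (-1 : ℂ) ^ m := by
      rw [hz, ← Complex.exp_nat_mul]
      have h2 : (k : ℂ) * ((x:ℝ) * Complex.I) = (m : ℂ) * (Real.pi * Complex.I) := by
        have hk0c : (k:ℂ) ≠ 0 := by exact_mod_cast hk0
        rw [hx]; push_cast; field_simp
      rw [h2, Complex.exp_nat_mul, Complex.exp_pi_mul_I]
    rw [if_neg hdvd]
    by_cases hm2 : 2 ∣ m
    · rw [if_pos hm2]
      obtain ⟨t, ht⟩ := hm2
      have : z ^ k = 1 := by rw [hzk, ht, pow_mul]; norm_num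
      rw [← hre, hsum, this]
      simp
    · rw [if_neg hm2]
      have hodd : Odd m := Nat.odd_iff.mpr (by omega)
      have : z ^ k = -1 := by rw [hzk, hodd.neg_one_pow]
      rw [← hre, hsum, this]
      have hw : z - 1 ≠ 0 := sub_ne_zero.mpr hz1
      have hzr : z.re = Real.cos x := Complex.exp_ofReal_mul_I_re x
      have hzi : z.im = Real.sin x := Complex.exp_ofReal_mul_I_im x
      have hcx : Real.cos x ≠ 1 := by
        intro h
        apply hz1
        have hs : Real.sin x = 0 := by
          have := Real.sin_sq_add_cos_sq x
          nlinarith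
        apply Complex.ext <;> simp [hzr, hzi, h, hs]
      rw [show (-1 : ℂ) - 1 = -2 by ring]
      rw [Complex.div_re]
      have hre2 : (z-1).re = Real.cos x - 1 := by simp [hzr]
      have him2 : (z-1).im = Real.sin x := by simp [hzi]
      rw [Complex.normSq_apply, hre2, him2]
      have hs2 : Real.sin x ^ 2 + Real.cos x ^ 2 = 1 := Real.sin_sq_add_cos_sq x
      have hden : (Real.cos x - 1) * (Real.cos x - 1) + Real.sin x * Real.sin x
          = 2 - 2 * Real.cos x := by nlinarith
      rw [hden]
      have : (2:ℝ) - 2 * Real.cos x ≠ 0 := by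
        intro h; apply hcx; linarith
      have hre3 : (-2 : ℂ).re = -2 := by norm_num
      have him3 : (-2 : ℂ).im = 0 := by norm_num
      rw [hre3, him3]
      field_simp
      ring



lemma cos_sum_Icc (k m : ℕ) (hk : 1 ≤ k) :
    ∑ n ∈ Finset.Icc 1 (k-1), Real.cos (Real.pi * m * n / k) =
      if 2 * k ∣ m then (k : ℝ) - 1 else if 2 ∣ m then -1 else 0 := by
  have hins : Finset.range k = insert 0 (Finset.Icc 1 (k-1)) := by
    ext n; simp [Finset.mem_range, Finset.mem_Icc]; omega
  have h0 : (0:ℕ) ∉ Finset.Icc 1 (k-1) := by simp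
  have hA := cos_sum_range k m hk
  rw [hins, Finset.sum_insert h0] at hA
  have hc0 : Real.cos (Real.pi * m * ((0:ℕ):ℝ) / k) = 1 := by norm_num
  rw [hc0] at hA
  split_ifs at hA ⊢ <;> linarith

lemma sin_orth (k c d : ℕ) (hk : 2 ≤ k) (hc1 : 1 ≤ c) (hc2 : c ≤ k - 1)
    (hd1 : 1 ≤ d) (hd2 : d ≤ 2*k - 3) :
    ∑ n ∈ Finset.Icc 1 (k-1), Real.sin (Real.pi * d * n / k) * Real.sin (Real.pi * c * n / k)
      = if d = c then (k:ℝ)/2 else if d + c = 2*k then -((k:ℝ)/2) else 0 := by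
  set e := max d c - min d c with he
  have hterm : ∀ n ∈ Finset.Icc 1 (k-1),
      Real.sin (Real.pi * d * n / k) * Real.sin (Real.pi * c * n / k)
      = (Real.cos (Real.pi * e * n / k) - Real.cos (Real.pi * (d+c) * n / k)) / 2 := by
    intro n _
    have hpq := Real.cos_sub_cos (Real.pi * ((d:ℝ) - c) * n / k) (Real.pi * ((d:ℝ) + c) * n / k)
    rw [show (Real.pi * ((d:ℝ) - c) * n / k + Real.pi * ((d:ℝ) + c) * n / k) / 2
          = Real.pi * (d:ℝ) * n / k from by ring,
        show (Real.pi * ((d:ℝ) - c) * n / k - Real.pi * ((d:ℝ) + c) * n / k) / 2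
          = -(Real.pi * (c:ℝ) * n / k) from by ring,
        Real.sin_neg] at hpq
    have hcose : Real.cos (Real.pi * (e:ℝ) * n / k) = Real.cos (Real.pi * ((d:ℝ) - c) * n / k) := by
      rcases le_total c d with h | h
      · have he' : (e:ℝ) = (d:ℝ) - c := by
          have : e = d - c := by omega
          rw [this]; push_cast [h]; ring
        rw [he']
      · have he' : (e:ℝ) = (c:ℝ) - d := by
          have : e = c - d := by omega
          rw [this]; push_cast [h]; ring
        rw [he', show Real.pi * ((c:ℝ) - d) * n / k = -(Real.pi * ((d:ℝ) - c) * n / k) from by ring,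
            Real.cos_neg]
    rw [hcose]
    linear_combination (-1/2 : ℝ) * hpq
  rw [Finset.sum_congr rfl hterm]
  rw [show (∑ n ∈ Finset.Icc 1 (k-1),
      (Real.cos (Real.pi * e * n / k) - Real.cos (Real.pi * (d+c) * n / k)) / 2)
      = ((∑ n ∈ Finset.Icc 1 (k-1), Real.cos (Real.pi * e * n / k))
        - ∑ n ∈ Finset.Icc 1 (k-1), Real.cos (Real.pi * (d+c) * n / k)) / 2 from by
    rw [← Finset.sum_sub_distrib, Finset.sum_div]]
  have h2 := cos_sum_Icc k (d+c) (by omega)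
  push_cast at h2
  rw [cos_sum_Icc k e (by omega), h2]
  have hiff1 : (2 * k ∣ e) ↔ d = c := by
    constructor
    · intro h
      have helt : e < 2 * k := by omega
      have := Nat.eq_zero_of_dvd_of_lt h helt
      omega
    · intro h
      have : e = 0 := by omega
      simp [this]
  have hiff2 : (2 * k ∣ d + c) ↔ d + c = 2 * k := by
    constructor
    · intro h
      obtain ⟨t, ht⟩ := h
      rcases t with _ | _ | t
      · omega
      · omega
      · exfalso
        have key : ∃ u : ℕ, d + c = u + 4 * k := ⟨2 * k * t, by rw [ht]; ring⟩
        obtain ⟨u, key⟩ := key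
        omega
    · intro h
      exact ⟨1, by omega⟩
  have hiff3 : (2 ∣ e) ↔ (2 ∣ d + c) := by omega
  simp only [hiff1, hiff2, hiff3]
  split_ifs <;> first | ring1 | (exfalso; omega)


lemma cos_diff_eq (u v θ : ℝ) :
    (Real.cos ((u - v) * θ) - Real.cos ((u + v) * θ)) / 2 = Real.sin (u * θ) * Real.sin (v * θ) := by
  have h := Real.cos_sub_cos ((u - v) * θ) ((u + v) * θ)
  rw [show ((u - v) * θ + (u + v) * θ) / 2 = u * θ from by ring,
      show ((u - v) * θ - (u + v) * θ) / 2 = -(v * θ) from by ring,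
      Real.sin_neg] at h
  linear_combination h / 2

lemma sin_prod (a b : ℕ) (ha : 1 ≤ a) (hb : 1 ≤ b) (θ : ℝ) :
    Real.sin (a * θ) * Real.sin (b * θ)
      = Real.sin θ * ∑ j ∈ Finset.range (min a b), Real.sin (((a:ℝ) + b - 1 - 2*j) * θ) := by
  have key : ∀ j : ℕ, Real.sin θ * Real.sin (((a:ℝ) + b - 1 - 2*j) * θ)
      = Real.cos (((a:ℝ) + b - 2*(j+1:ℕ)) * θ) / 2 - Real.cos (((a:ℝ) + b - 2*(j:ℕ)) * θ) / 2 := by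
    intro j
    have h := Real.cos_sub_cos (((a:ℝ) + b - 1 - 2*j - 1) * θ) (((a:ℝ) + b - 1 - 2*j + 1) * θ)
    rw [show ((((a:ℝ) + b - 1 - 2*j - 1) * θ + ((a:ℝ) + b - 1 - 2*j + 1) * θ) / 2)
          = ((a:ℝ) + b - 1 - 2*j) * θ from by ring,
        show ((((a:ℝ) + b - 1 - 2*j - 1) * θ - ((a:ℝ) + b - 1 - 2*j + 1) * θ) / 2)
          = -θ from by ring,
        Real.sin_neg,
        show (((a:ℝ) + b - 1 - 2*j - 1) * θ) = (((a:ℝ) + b - 2*(j+1:ℕ)) * θ) from by push_cast; ring,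
        show (((a:ℝ) + b - 1 - 2*j + 1) * θ) = (((a:ℝ) + b - 2*(j:ℕ)) * θ) from by push_cast; ring] at h
    linear_combination (-1/2 : ℝ) * h
  have tele := Finset.sum_range_sub (fun i : ℕ => Real.cos (((a:ℝ) + b - 2*(i:ℕ)) * θ) / 2) (min a b)
  calc Real.sin (a * θ) * Real.sin (b * θ)
      = (Real.cos (((a:ℝ) + b - 2*(min a b : ℕ)) * θ) / 2
          - Real.cos (((a:ℝ) + b - 2*((0:ℕ):ℝ)) * θ) / 2) := by
        rcases le_total a b with h | h
        · rw [min_eq_left h]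
          rw [show ((a:ℝ) + b - 2*(a:ℕ)) * θ = ((b:ℝ) - a) * θ from by push_cast; ring,
              show ((a:ℝ) + b - 2*((0:ℕ):ℝ)) * θ = ((b:ℝ) + a) * θ from by push_cast; ring]
          rw [show Real.sin ((a:ℝ)*θ) * Real.sin ((b:ℝ)*θ)
                = Real.sin ((b:ℝ)*θ) * Real.sin ((a:ℝ)*θ) from by ring]
          rw [← cos_diff_eq (b:ℝ) (a:ℝ) θ]
          ring
        · rw [min_eq_right h]
          rw [show ((a:ℝ) + b - 2*(b:ℕ)) * θ = ((a:ℝ) - b) * θ from by push_cast; ring,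
              show ((a:ℝ) + b - 2*((0:ℕ):ℝ)) * θ = ((a:ℝ) + b) * θ from by push_cast; ring]
          rw [← cos_diff_eq (a:ℝ) (b:ℝ) θ]
          ring
    _ = ∑ j ∈ Finset.range (min a b),
          (Real.cos (((a:ℝ) + b - 2*((j+1:ℕ):ℝ)) * θ) / 2
            - Real.cos (((a:ℝ) + b - 2*((j:ℕ):ℝ)) * θ) / 2) := by
        rw [tele]
    _ = Real.sin θ * ∑ j ∈ Finset.range (min a b), Real.sin (((a:ℝ) + b - 1 - 2*j) * θ) := by
        rw [Finset.mul_sum]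
        exact (Finset.sum_congr rfl fun j _ => (key j)).symm

lemma sum_ite_count (m c s : ℕ) :
    (∑ j ∈ Finset.range m, if c + 2*j = s then (1:ℝ) else 0)
      = if c ≤ s ∧ 2 ∣ (s - c) ∧ s < c + 2*m then 1 else 0 := by
  induction m with
  | zero =>
      simp only [Finset.range_zero, Finset.sum_empty]
      rw [if_neg (by omega)]
  | succ m ih =>
      rw [Finset.sum_range_succ, ih]
      split_ifs <;> first | (exfalso; omega) | norm_num

/-- the `sl₂` Verlinde numbers agree with the truncated
Clebsch–Gordan rule: `N_{ab}^c = 1` iff `|a−b|+1 ≤ c ≤ min(a+b−1, 2ℓ+3−a−b)` and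
`c ≡ a+b−1 (mod 2)`, and `N_{ab}^c = 0` otherwise. -/
theorem verlindeN_eq_fusion_rule (ℓ : ℕ) (hℓ : 1 ≤ ℓ) (a b c : ℕ)
    (ha : 1 ≤ a) (ha' : a ≤ ℓ + 1) (hb : 1 ≤ b) (hb' : b ≤ ℓ + 1)
    (hc : 1 ≤ c) (hc' : c ≤ ℓ + 1) :
    verlindeN ℓ a b c =
      if ((a : ℤ) - (b : ℤ)).natAbs + 1 ≤ c ∧
          c ≤ min (a + b - 1) (2 * ℓ + 3 - a - b) ∧ c % 2 = (a + b - 1) % 2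
        then 1 else 0 := by
  have hkpos : (0:ℝ) < (ℓ:ℝ) + 2 := by positivity
  have hkne : ((ℓ:ℝ) + 2) ≠ 0 := ne_of_gt hkpos
  have hqpos : (0:ℝ) < 2 / ((ℓ:ℝ)+2) := by positivity
  have hsqpos : 0 < Real.sqrt (2/((ℓ:ℝ)+2)) := Real.sqrt_pos.mpr hqpos
  have hsqne : Real.sqrt (2/((ℓ:ℝ)+2)) ≠ 0 := ne_of_gt hsqpos
  have hsq : Real.sqrt (2/((ℓ:ℝ)+2)) * Real.sqrt (2/((ℓ:ℝ)+2)) = 2/((ℓ:ℝ)+2) :=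
    Real.mul_self_sqrt (le_of_lt hqpos)
  rw [verlindeN]
  have hstep1 : ∀ n ∈ Finset.Icc 1 (ℓ+1),
      sl2Sfun ℓ a n * sl2Sfun ℓ b n * sl2Sfun ℓ c n / sl2Sfun ℓ 1 n
      = ∑ j ∈ Finset.range (min a b),
          (2/((ℓ:ℝ)+2)) * (Real.sin (Real.pi * ((a:ℝ)+(b:ℝ)-1-2*(j:ℝ)) * (n:ℝ) / ((ℓ:ℝ)+2))
            * Real.sin (Real.pi * (c:ℝ) * (n:ℝ) / ((ℓ:ℝ)+2))) := by
    intro n hn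
    rw [Finset.mem_Icc] at hn
    have hn1 : (0:ℝ) < (n:ℝ) := by exact_mod_cast Nat.lt_of_lt_of_le Nat.zero_lt_one hn.1
    set θ : ℝ := Real.pi * n / ((ℓ:ℝ)+2) with hθ
    have hθpos : 0 < θ := by
      rw [hθ]; exact div_pos (mul_pos Real.pi_pos hn1) hkpos
    have hθlt : θ < Real.pi := by
      rw [hθ]
      have h1 : (n:ℝ) < (ℓ:ℝ)+2 := by
        have : n < ℓ+2 := by omega
        push_cast; exact_mod_cast this
      calc Real.pi * n / ((ℓ:ℝ)+2) = Real.pi * ((n:ℝ)/((ℓ:ℝ)+2)) := by ring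
        _ < Real.pi * 1 := by
            apply mul_lt_mul_of_pos_left _ Real.pi_pos
            rw [div_lt_one hkpos]; exact h1
        _ = Real.pi := by ring
    have hsθ : 0 < Real.sin θ := Real.sin_pos_of_pos_of_lt_pi hθpos hθlt
    have hsθne : Real.sin θ ≠ 0 := ne_of_gt hsθ
    rw [sl2Sfun, sl2Sfun, sl2Sfun, sl2Sfun]
    rw [show Real.pi * (a:ℝ) * (n:ℝ) / ((ℓ:ℝ)+2) = (a:ℝ) * θ from by rw [hθ]; ring,
        show Real.pi * (b:ℝ) * (n:ℝ) / ((ℓ:ℝ)+2) = (b:ℝ) * θ from by rw [hθ]; ring,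
        show Real.pi * (c:ℝ) * (n:ℝ) / ((ℓ:ℝ)+2) = (c:ℝ) * θ from by rw [hθ]; ring,
        show Real.pi * ((1:ℕ):ℝ) * (n:ℝ) / ((ℓ:ℝ)+2) = θ from by rw [hθ]; push_cast; ring]
    have hsumarg : ∑ j ∈ Finset.range (min a b),
          (2/((ℓ:ℝ)+2)) * (Real.sin (Real.pi * ((a:ℝ)+(b:ℝ)-1-2*(j:ℝ)) * (n:ℝ) / ((ℓ:ℝ)+2))
            * Real.sin ((c:ℝ) * θ))
        = (2/((ℓ:ℝ)+2)) * (Real.sin ((c:ℝ)*θ)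
            * ∑ j ∈ Finset.range (min a b), Real.sin (((a:ℝ)+(b:ℝ)-1-2*(j:ℝ)) * θ)) := by
      rw [Finset.mul_sum, Finset.mul_sum]
      apply Finset.sum_congr rfl
      intro j _
      rw [show Real.pi * ((a:ℝ)+(b:ℝ)-1-2*(j:ℝ)) * (n:ℝ) / ((ℓ:ℝ)+2)
            = ((a:ℝ)+(b:ℝ)-1-2*(j:ℝ)) * θ from by rw [hθ]; ring]
      ring
    rw [hsumarg]
    have hab := sin_prod a b ha hb θ
    rw [div_eq_iff (mul_ne_zero hsqne hsθne)]
    linear_combination (Real.sqrt (2/((ℓ:ℝ)+2)) * Real.sqrt (2/((ℓ:ℝ)+2)) * Real.sqrt (2/((ℓ:ℝ)+2))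
        * Real.sin ((c:ℝ)*θ)) * hab
      + (Real.sqrt (2/((ℓ:ℝ)+2)) * Real.sin ((c:ℝ)*θ) * Real.sin θ
        * ∑ j ∈ Finset.range (min a b), Real.sin (((a:ℝ)+(b:ℝ)-1-2*(j:ℝ)) * θ)) * hsq
  rw [Finset.sum_congr rfl hstep1]
  rw [Finset.sum_comm]
  have hstep2 : ∀ j ∈ Finset.range (min a b),
      (∑ n ∈ Finset.Icc 1 (ℓ+1),
        (2/((ℓ:ℝ)+2)) * (Real.sin (Real.pi * ((a:ℝ)+(b:ℝ)-1-2*(j:ℝ)) * (n:ℝ) / ((ℓ:ℝ)+2))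
          * Real.sin (Real.pi * (c:ℝ) * (n:ℝ) / ((ℓ:ℝ)+2))))
      = (if c + 2*j = a + b - 1 then (1:ℝ) else 0)
        - (if (2*(ℓ+2) - c) + 2*j = a + b - 1 then (1:ℝ) else 0) := by
    intro j hj
    rw [Finset.mem_range] at hj
    set d : ℕ := a + b - 1 - 2*j with hd
    have hdj : d + 2*j + 1 = a + b := by omega
    have hdR : (d:ℝ) = (a:ℝ) + (b:ℝ) - 1 - 2*(j:ℝ) := by
      have h' : ((d:ℝ)) + 2*(j:ℝ) + 1 = (a:ℝ) + (b:ℝ) := by exact_mod_cast congrArg (Nat.cast : ℕ → ℝ) hdj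
      linarith
    have horth := sin_orth (ℓ+2) c d (by omega) hc (by omega) (by omega) (by omega)
    have hIcc : Finset.Icc 1 (ℓ+2-1) = Finset.Icc 1 (ℓ+1) := rfl
    rw [hIcc] at horth
    push_cast at horth
    rw [← Finset.mul_sum]
    have hargs : ∀ n ∈ Finset.Icc 1 (ℓ+1),
        Real.sin (Real.pi * ((a:ℝ)+(b:ℝ)-1-2*(j:ℝ)) * (n:ℝ) / ((ℓ:ℝ)+2))
          * Real.sin (Real.pi * (c:ℝ) * (n:ℝ) / ((ℓ:ℝ)+2))
        = Real.sin (Real.pi * (d:ℝ) * (n:ℝ) / ((ℓ:ℝ)+2))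
          * Real.sin (Real.pi * (c:ℝ) * (n:ℝ) / ((ℓ:ℝ)+2)) := by
      intro n _; rw [hdR]
    rw [Finset.sum_congr rfl hargs, horth]
    split_ifs <;> first | (exfalso; omega) | (field_simp <;> ring1) | norm_num
  rw [Finset.sum_congr rfl hstep2, Finset.sum_sub_distrib,
      sum_ite_count (min a b) c (a+b-1), sum_ite_count (min a b) (2*(ℓ+2)-c) (a+b-1)]
  split_ifs <;> first | (exfalso; omega) | norm_num
end

section
/- Let R = ℤ[x] be the representation ring of sl₂ with χ_n (character of the (n+1)-dimensional irreducible) satisfying χ₀=1, χ₁=x, χ_1χ_n = χ_{n+1}+χ_{n−1}. Fix ℓ ≥ 1. Define F(χ_n) = χ_n for 0 ≤ n ≤ ℓ, F(χ_{ℓ+1}) = 0, and extend by the affine-Weyl reflection rule F(χ_n) = −F(χ_{2ℓ+2−n}) for n ≥ ℓ+2 (with F(χ_n)=0 when n ≡ ℓ+1 mod ℓ+2, and sign ε(w) for the reflection into the alcove). Then F is a surjective ring homomorphism from R onto the level-ℓ sl₂ fusion ring, whose structure constants on {F(χ_n)}_{n=0}^{ℓ} are N_{ab}^c. -/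
open Finset

/-- The characters of `sl₂`: `χ₀ = 1`, `χ₁ = x`, `χ₁χ_n = χ_{n+1} + χ_{n−1}`, realized in
the representation ring `R = ℤ[x]`. -/
noncomputable def sl2char : ℕ → Polynomial ℤ
  | 0 => 1
  | 1 => Polynomial.X
  | (n + 2) => Polynomial.X * sl2char (n + 1) - sl2char n

/-- The level-`ℓ` `sl₂` fusion coefficients (truncated Clebsch–Gordan rule, indices
`0 ≤ a, b, c ≤ ℓ`): multiplicity `1` iff `|a−b| ≤ c ≤ min(a+b, 2ℓ−a−b)` and
`c ≡ a+b (mod 2)`. -/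
def fusN (ℓ : ℕ) (a b c : ℕ) : ℤ :=
  if ((a : ℤ) - (b : ℤ)).natAbs ≤ c ∧ c ≤ min (a + b) (2 * ℓ - a - b) ∧
      c % 2 = (a + b) % 2
    then 1 else 0

/-- The fusion product on the free ℤ-module with basis `χ₀, …, χ_ℓ`. -/
def fusMul (ℓ : ℕ) (x y : Fin (ℓ + 1) → ℤ) : Fin (ℓ + 1) → ℤ :=
  fun c => ∑ a : Fin (ℓ + 1), ∑ b : Fin (ℓ + 1), x a * y b * fusN ℓ a b c

namespace KacWalton

/-- A clean (omega-friendly) form of the fusion condition. -/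
def good (ℓ a b c : ℕ) : Prop :=
  a ≤ b + c ∧ b ≤ a + c ∧ c ≤ a + b ∧
    (a + b + c ≤ 2 * ℓ ∨ (c = 0 ∧ 2 * ℓ < a + b)) ∧ (a + b + c) % 2 = 0

lemma fusN_spec (ℓ a b c : ℕ) :
    (fusN ℓ a b c = 1 ∧ good ℓ a b c) ∨ (fusN ℓ a b c = 0 ∧ ¬ good ℓ a b c) := by
  unfold fusN good
  split_ifs with h
  · exact Or.inl ⟨rfl, by omega⟩
  · exact Or.inr ⟨rfl, by omega⟩

lemma fusN_out_c (ℓ a b c : ℕ) (ha : a ≤ ℓ) (hb : b ≤ ℓ) (hc : ℓ < c) :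
    fusN ℓ a b c = 0 := by
  rcases fusN_spec ℓ a b c with ⟨_, hg⟩ | ⟨e, _⟩
  · exfalso; unfold good at hg; omega
  · exact e

lemma fusN_out_a (ℓ a b c : ℕ) (ha : ℓ < a) (hb : b ≤ ℓ) (hc : c ≤ ℓ) :
    fusN ℓ a b c = 0 := by
  rcases fusN_spec ℓ a b c with ⟨_, hg⟩ | ⟨e, _⟩
  · exfalso; unfold good at hg; omega
  · exact e

lemma fusN_e0 (ℓ b c : ℕ) (hb : b ≤ ℓ) (hc : c ≤ ℓ) :
    fusN ℓ 0 b c = if c = b then 1 else 0 := by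
  rcases fusN_spec ℓ 0 b c with ⟨e, hg⟩ | ⟨e, hg⟩ <;> unfold good at hg <;>
    rw [e] <;> split_ifs <;> omega

lemma fusN_spec' (ℓ a b c : ℕ) :
    ∃ x : ℤ, fusN ℓ a b c = x ∧ ((x = 1 ∧ good ℓ a b c) ∨ (x = 0 ∧ ¬ good ℓ a b c)) := by
  refine ⟨fusN ℓ a b c, rfl, ?_⟩
  rcases fusN_spec ℓ a b c with ⟨e, h⟩ | ⟨e, h⟩
  · exact Or.inl ⟨e, h⟩
  · exact Or.inr ⟨e, h⟩

set_option maxHeartbeats 1000000 in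
/-- The key combinatorial identity behind associativity: multiplying by `χ₁` on the
left of a fusion product matches the tridiagonal action on the output index. -/
lemma fusN_key (ℓ a b c : ℕ) (ha : a ≤ ℓ) (hb : b ≤ ℓ) (hc : c ≤ ℓ) :
    (if a = 0 then 0 else fusN ℓ (a - 1) b c) + fusN ℓ (a + 1) b c
      = (if c = 0 then 0 else fusN ℓ a b (c - 1)) + fusN ℓ a b (c + 1) := by
  obtain _ | a' := a <;> obtain _ | c' := c <;>
    simp only [Nat.succ_sub_one, if_pos rfl, Nat.zero_eq,
      if_neg (Nat.succ_ne_zero _), reduceIte]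
  · obtain ⟨x2, e2, h2⟩ := fusN_spec' ℓ 1 b 0
    obtain ⟨x4, e4, h4⟩ := fusN_spec' ℓ 0 b 1
    unfold good at h2 h4
    rw [e2, e4]; omega
  · obtain ⟨x2, e2, h2⟩ := fusN_spec' ℓ 1 b (c' + 1)
    obtain ⟨x3, e3, h3⟩ := fusN_spec' ℓ 0 b c'
    obtain ⟨x4, e4, h4⟩ := fusN_spec' ℓ 0 b (c' + 2)
    unfold good at h2 h3 h4
    rw [e2, e3, e4]; omega
  · obtain ⟨x1, e1, h1⟩ := fusN_spec' ℓ a' b 0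
    obtain ⟨x2, e2, h2⟩ := fusN_spec' ℓ (a' + 2) b 0
    obtain ⟨x4, e4, h4⟩ := fusN_spec' ℓ (a' + 1) b 1
    unfold good at h1 h2 h4
    rw [e1, e2, e4]; omega
  · obtain ⟨x1, e1, h1⟩ := fusN_spec' ℓ a' b (c' + 1)
    obtain ⟨x2, e2, h2⟩ := fusN_spec' ℓ (a' + 2) b (c' + 1)
    obtain ⟨x3, e3, h3⟩ := fusN_spec' ℓ (a' + 1) b c'
    obtain ⟨x4, e4, h4⟩ := fusN_spec' ℓ (a' + 1) b (c' + 2)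
    unfold good at h1 h2 h3 h4
    rw [e1, e2, e3, e4]; omega

/-- Extension of a vector by zero. -/
def E (ℓ : ℕ) (v : Fin (ℓ + 1) → ℤ) (n : ℕ) : ℤ :=
  if h : n < ℓ + 1 then v ⟨n, h⟩ else 0

/-- Fusion multiplication by `χ₁`, as tridiagonal operator. -/
def T (ℓ : ℕ) (v : Fin (ℓ + 1) → ℤ) : Fin (ℓ + 1) → ℤ :=
  fun c => (if (c : ℕ) = 0 then 0 else E ℓ v ((c : ℕ) - 1)) + E ℓ v ((c : ℕ) + 1)

/-- The scalar value of `F(χ_n)` at index `j` (affine Weyl alcove picture). -/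
def fs (ℓ : ℕ) (n j : ℕ) : ℤ :=
  if n % (2 * ℓ + 4) ≤ ℓ ∧ j = n % (2 * ℓ + 4) then 1
  else if ℓ + 2 ≤ n % (2 * ℓ + 4) ∧ n % (2 * ℓ + 4) ≤ 2 * ℓ + 2 ∧
      j + n % (2 * ℓ + 4) = 2 * ℓ + 2 then -1
  else 0

/-- `F(χ_n)` as a vector. -/
def fsfun (ℓ n : ℕ) : Fin (ℓ + 1) → ℤ := fun c => fs ℓ n (c : ℕ)

/-- Images of monomials. -/
noncomputable def g (ℓ : ℕ) : ℕ → (Fin (ℓ + 1) → ℤ)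
  | 0 => Pi.single 0 1
  | (k + 1) => T ℓ (g ℓ k)

noncomputable def toFl : Polynomial ℤ →ₗ[ℤ] (ℕ →₀ ℤ) where
  toFun p := p.toFinsupp.coeff
  map_add' p q := by rw [Polynomial.toFinsupp_add]; rfl
  map_smul' c p := by rw [Polynomial.toFinsupp_smul]; rfl

/-- The Kac–Walton map. -/
noncomputable def F (ℓ : ℕ) : Polynomial ℤ →ₗ[ℤ] (Fin (ℓ + 1) → ℤ) :=
  (Finsupp.linearCombination ℤ (g ℓ)).comp toFl

lemma F_monomial (ℓ : ℕ) (k : ℕ) (z : ℤ) :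
    F ℓ (Polynomial.monomial k z) = z • g ℓ k := by
  simp [F, toFl, Polynomial.toFinsupp_monomial, AddMonoidAlgebra.coeff_single,
    Finsupp.linearCombination_single]

lemma E_coe (ℓ : ℕ) (v : Fin (ℓ + 1) → ℤ) (b : Fin (ℓ + 1)) : E ℓ v (b : ℕ) = v b := by
  unfold E; rw [dif_pos b.isLt]

lemma E_add (ℓ : ℕ) (v w : Fin (ℓ + 1) → ℤ) (n : ℕ) :
    E ℓ (v + w) n = E ℓ v n + E ℓ w n := by
  unfold E; split <;> simp

lemma E_smul (ℓ : ℕ) (z : ℤ) (v : Fin (ℓ + 1) → ℤ) (n : ℕ) :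
    E ℓ (z • v) n = z * E ℓ v n := by
  unfold E; split <;> simp

lemma E_ge (ℓ : ℕ) (v : Fin (ℓ + 1) → ℤ) (m : ℕ) (h : ℓ + 1 ≤ m) : E ℓ v m = 0 := by
  unfold E; rw [dif_neg (by omega)]

lemma T_apply (ℓ : ℕ) (v : Fin (ℓ + 1) → ℤ) (c : Fin (ℓ + 1)) :
    T ℓ v c = (if (c : ℕ) = 0 then 0 else E ℓ v ((c : ℕ) - 1)) + E ℓ v ((c : ℕ) + 1) :=
  rfl

lemma T_add (ℓ : ℕ) (v w : Fin (ℓ + 1) → ℤ) : T ℓ (v + w) = T ℓ v + T ℓ w := by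
  funext c
  simp only [T, Pi.add_apply, E_add]
  split <;> ring

lemma T_smul (ℓ : ℕ) (z : ℤ) (v : Fin (ℓ + 1) → ℤ) : T ℓ (z • v) = z • T ℓ v := by
  funext c
  simp only [T, Pi.smul_apply, E_smul, smul_eq_mul]
  split <;> ring

lemma F_X_mul (ℓ : ℕ) (p : Polynomial ℤ) : F ℓ (Polynomial.X * p) = T ℓ (F ℓ p) := by
  induction p using Polynomial.induction_on' with
  | add p q hp hq => rw [mul_add, map_add, hp, hq, map_add, T_add]
  | monomial n a =>
      have hX : (Polynomial.X : Polynomial ℤ) = Polynomial.monomial 1 1 := by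
        simp [Polynomial.monomial_one_one_eq_X]
      rw [hX, Polynomial.monomial_mul_monomial, F_monomial, F_monomial, one_mul,
        show 1 + n = n + 1 from by omega]
      show a • g ℓ (n + 1) = T ℓ (a • g ℓ n)
      rw [T_smul]
      rfl

lemma E_T (ℓ : ℕ) (v : Fin (ℓ + 1) → ℤ) (a : ℕ) (ha : a ≤ ℓ) :
    E ℓ (T ℓ v) a = (if a = 0 then 0 else E ℓ v (a - 1)) + E ℓ v (a + 1) := by
  have h : a < ℓ + 1 := by omega
  have : E ℓ (T ℓ v) a = T ℓ v ⟨a, h⟩ := dif_pos h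
  rw [this, T_apply]

/-- `fusMul` written with sums over `range` and zero-extended vectors. -/
lemma fusMul_eq (ℓ : ℕ) (v w : Fin (ℓ + 1) → ℤ) (c : Fin (ℓ + 1)) :
    fusMul ℓ v w c =
      ∑ a ∈ range (ℓ + 1), ∑ b ∈ range (ℓ + 1), E ℓ v a * E ℓ w b * fusN ℓ a b c := by
  unfold fusMul
  rw [← Fin.sum_univ_eq_sum_range
    (fun a => ∑ b ∈ range (ℓ + 1), E ℓ v a * E ℓ w b * fusN ℓ a b c) (ℓ + 1)]
  refine Finset.sum_congr rfl fun a _ => ?_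
  rw [← Fin.sum_univ_eq_sum_range
    (fun b => E ℓ v (a : ℕ) * E ℓ w b * fusN ℓ a b c) (ℓ + 1)]
  refine Finset.sum_congr rfl fun b _ => ?_
  rw [E_coe, E_coe]

lemma E_fusMul (ℓ : ℕ) (v w : Fin (ℓ + 1) → ℤ) (m : ℕ) :
    E ℓ (fusMul ℓ v w) m =
      ∑ a ∈ range (ℓ + 1), ∑ b ∈ range (ℓ + 1), E ℓ v a * E ℓ w b * fusN ℓ a b m := by
  by_cases h : m < ℓ + 1
  · have h1 : E ℓ (fusMul ℓ v w) m = fusMul ℓ v w ⟨m, h⟩ := dif_pos h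
    rw [h1, fusMul_eq]
  · rw [E_ge ℓ _ m (by omega)]
    symm
    refine Finset.sum_eq_zero fun a ha => Finset.sum_eq_zero fun b hb => ?_
    rw [fusN_out_c ℓ a b m (by simp at ha; omega) (by simp at hb; omega) (by omega),
      mul_zero]

/-- Key structural lemma: multiplication by `χ₁` commutes with fusion multiplication. -/
lemma fusMul_T (ℓ : ℕ) (v w : Fin (ℓ + 1) → ℤ) :
    fusMul ℓ (T ℓ v) w = T ℓ (fusMul ℓ v w) := by
  funext c
  have hc : (c : ℕ) ≤ ℓ := by have := c.isLt; omega
  set R : ℕ → ℤ := fun a => ∑ b ∈ range (ℓ + 1), E ℓ w b * fusN ℓ a b (c : ℕ) with hR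
  have hRout : R (ℓ + 1) = 0 := by
    refine Finset.sum_eq_zero fun b hb => ?_
    rw [fusN_out_a ℓ (ℓ + 1) b c (by omega) (by simp at hb; omega) hc, mul_zero]
  -- LHS as a single range sum over a
  have hL : fusMul ℓ (T ℓ v) w c = ∑ a ∈ range (ℓ + 1), E ℓ (T ℓ v) a * R a := by
    rw [fusMul_eq]
    refine Finset.sum_congr rfl fun a _ => ?_
    rw [hR, Finset.mul_sum]
    exact Finset.sum_congr rfl fun b _ => (mul_assoc _ _ _)
  -- summation by parts: move the tridiagonal operator from v to R
  have S1 : ∑ a ∈ range (ℓ + 1), (if a = 0 then 0 else E ℓ v (a - 1) * R a)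
      = ∑ a ∈ range ℓ, E ℓ v a * R (a + 1) := by
    rw [Finset.sum_range_succ']
    simp
  have S2 : ∑ a ∈ range (ℓ + 1), E ℓ v (a + 1) * R a
      = ∑ a ∈ range ℓ, E ℓ v (a + 1) * R a := by
    rw [Finset.sum_range_succ, E_ge ℓ v (ℓ + 1) le_rfl, zero_mul, add_zero]
  have S1' : ∑ a ∈ range (ℓ + 1), E ℓ v a * R (a + 1)
      = ∑ a ∈ range ℓ, E ℓ v a * R (a + 1) := by
    rw [Finset.sum_range_succ, hRout, mul_zero, add_zero]
  have S2' : ∑ a ∈ range (ℓ + 1), E ℓ v a * (if a = 0 then 0 else R (a - 1))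
      = ∑ a ∈ range ℓ, E ℓ v (a + 1) * R a := by
    rw [Finset.sum_range_succ']
    simp
  have hswap : fusMul ℓ (T ℓ v) w c
      = ∑ a ∈ range (ℓ + 1), E ℓ v a * ((if a = 0 then 0 else R (a - 1)) + R (a + 1)) := by
    rw [hL]
    calc ∑ a ∈ range (ℓ + 1), E ℓ (T ℓ v) a * R a
        = ∑ a ∈ range (ℓ + 1),
            ((if a = 0 then 0 else E ℓ v (a - 1) * R a) + E ℓ v (a + 1) * R a) := by
          refine Finset.sum_congr rfl fun a ha => ?_
          rw [E_T ℓ v a (by simp at ha; omega)]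
          split_ifs <;> ring
      _ = (∑ a ∈ range (ℓ + 1), (if a = 0 then 0 else E ℓ v (a - 1) * R a))
            + ∑ a ∈ range (ℓ + 1), E ℓ v (a + 1) * R a := Finset.sum_add_distrib
      _ = (∑ a ∈ range (ℓ + 1), E ℓ v a * (if a = 0 then 0 else R (a - 1)))
            + ∑ a ∈ range (ℓ + 1), E ℓ v a * R (a + 1) := by
          rw [S1, S2, S1', S2']; ring
      _ = ∑ a ∈ range (ℓ + 1),
            E ℓ v a * ((if a = 0 then 0 else R (a - 1)) + R (a + 1)) := by
          rw [← Finset.sum_add_distrib]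
          exact Finset.sum_congr rfl fun a _ => by ring
  -- apply the key fusN identity pointwise
  have hkey : ∀ a ∈ range (ℓ + 1),
      E ℓ v a * ((if a = 0 then 0 else R (a - 1)) + R (a + 1))
        = (∑ b ∈ range (ℓ + 1),
            E ℓ v a * E ℓ w b * (if (c : ℕ) = 0 then 0 else fusN ℓ a b ((c : ℕ) - 1)))
          + ∑ b ∈ range (ℓ + 1), E ℓ v a * E ℓ w b * fusN ℓ a b ((c : ℕ) + 1) := by
    intro a ha
    have ha' : a ≤ ℓ := by simp at ha; omega
    have step : (if a = 0 then 0 else R (a - 1)) + R (a + 1)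
        = ∑ b ∈ range (ℓ + 1),
            E ℓ w b * ((if a = 0 then 0 else fusN ℓ (a - 1) b (c : ℕ))
              + fusN ℓ (a + 1) b (c : ℕ)) := by
      have h1 : (if a = 0 then 0 else R (a - 1))
          = ∑ b ∈ range (ℓ + 1), E ℓ w b * (if a = 0 then 0 else fusN ℓ (a - 1) b (c : ℕ)) := by
        split_ifs with h
        · simp
        · rfl
      rw [h1, hR, ← Finset.sum_add_distrib]
      exact Finset.sum_congr rfl fun b _ => by ring
    have step2 : ∀ b ∈ range (ℓ + 1),
        E ℓ w b * ((if a = 0 then 0 else fusN ℓ (a - 1) b (c : ℕ)) + fusN ℓ (a + 1) b (c : ℕ))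
          = E ℓ w b * ((if (c : ℕ) = 0 then 0 else fusN ℓ a b ((c : ℕ) - 1))
              + fusN ℓ a b ((c : ℕ) + 1)) := by
      intro b hb
      rw [fusN_key ℓ a b (c : ℕ) ha' (by simp at hb; omega) hc]
    rw [step, Finset.sum_congr rfl step2, Finset.mul_sum, ← Finset.sum_add_distrib]
    exact Finset.sum_congr rfl fun b _ => by ring
  rw [hswap, Finset.sum_congr rfl hkey, Finset.sum_add_distrib, T_apply,
    E_fusMul, E_fusMul]
  congr 1
  split_ifs with h
  · exact Finset.sum_eq_zero fun a _ => Finset.sum_eq_zero fun b _ => mul_zero _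
  · rfl

lemma fusMul_single0 (ℓ : ℕ) (w : Fin (ℓ + 1) → ℤ) :
    fusMul ℓ (Pi.single 0 1) w = w := by
  funext c
  unfold fusMul
  rw [Finset.sum_eq_single (0 : Fin (ℓ + 1))
    (fun a _ ha => Finset.sum_eq_zero fun b _ => by
      rw [Pi.single_eq_of_ne ha, zero_mul, zero_mul])
    (fun h => absurd (Finset.mem_univ _) h)]
  have h0 : ((0 : Fin (ℓ + 1)) : ℕ) = 0 := rfl
  rw [Finset.sum_eq_single c
    (fun b _ hb => by
      rw [h0, fusN_e0 ℓ b c (by have := b.isLt; omega) (by have := c.isLt; omega),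
        if_neg (fun h => hb (Fin.ext h.symm)), mul_zero])
    (fun h => absurd (Finset.mem_univ _) h), h0,
    fusN_e0 ℓ c c (by have := c.isLt; omega) (by have := c.isLt; omega), if_pos rfl,
    Pi.single_eq_same, one_mul, mul_one]

lemma fusMul_add_left (ℓ : ℕ) (u v w : Fin (ℓ + 1) → ℤ) :
    fusMul ℓ (u + v) w = fusMul ℓ u w + fusMul ℓ v w := by
  funext c
  simp only [fusMul, Pi.add_apply, ← Finset.sum_add_distrib]
  exact Finset.sum_congr rfl fun a _ => Finset.sum_congr rfl fun b _ => by ring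

lemma fusMul_add_right (ℓ : ℕ) (u v w : Fin (ℓ + 1) → ℤ) :
    fusMul ℓ u (v + w) = fusMul ℓ u v + fusMul ℓ u w := by
  funext c
  simp only [fusMul, Pi.add_apply, ← Finset.sum_add_distrib]
  exact Finset.sum_congr rfl fun a _ => Finset.sum_congr rfl fun b _ => by ring

lemma fusMul_smul_left (ℓ : ℕ) (z : ℤ) (v w : Fin (ℓ + 1) → ℤ) :
    fusMul ℓ (z • v) w = z • fusMul ℓ v w := by
  funext c
  simp only [fusMul, Pi.smul_apply, smul_eq_mul, Finset.mul_sum]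
  exact Finset.sum_congr rfl fun a _ => Finset.sum_congr rfl fun b _ => by ring

lemma fusMul_smul_right (ℓ : ℕ) (z : ℤ) (v w : Fin (ℓ + 1) → ℤ) :
    fusMul ℓ v (z • w) = z • fusMul ℓ v w := by
  funext c
  simp only [fusMul, Pi.smul_apply, smul_eq_mul, Finset.mul_sum]
  exact Finset.sum_congr rfl fun a _ => Finset.sum_congr rfl fun b _ => by ring

lemma g_mul (ℓ : ℕ) (i j : ℕ) : fusMul ℓ (g ℓ i) (g ℓ j) = g ℓ (i + j) := by
  induction i with
  | zero =>
      rw [show g ℓ 0 = Pi.single 0 1 from rfl, fusMul_single0, Nat.zero_add]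
  | succ k ih =>
      rw [show g ℓ (k + 1) = T ℓ (g ℓ k) from rfl, fusMul_T, ih,
        show k + 1 + j = (k + j) + 1 from by omega]
      rfl

/-- Multiplicativity of `F`. -/
lemma F_mul (ℓ : ℕ) (p q : Polynomial ℤ) :
    F ℓ (p * q) = fusMul ℓ (F ℓ p) (F ℓ q) := by
  induction p using Polynomial.induction_on' with
  | add p p' hp hp' =>
      rw [add_mul, map_add, hp, hp', map_add, fusMul_add_left]
  | monomial n z =>
      induction q using Polynomial.induction_on' with
      | add q q' hq hq' =>
          rw [mul_add, map_add, hq, hq', map_add, fusMul_add_right]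
      | monomial m z' =>
          rw [Polynomial.monomial_mul_monomial, F_monomial, F_monomial, F_monomial,
            fusMul_smul_left, fusMul_smul_right, g_mul, smul_smul]

lemma E_fsfun (ℓ n m : ℕ) :
    E ℓ (fsfun ℓ n) m = if m < ℓ + 1 then fs ℓ n m else 0 := by
  unfold E fsfun
  split_ifs <;> rfl

/-- mod-successor helper -/
lemma mod_succ (P n : ℕ) (hP : 2 ≤ P) :
    (n + 1) % P = if n % P + 1 = P then 0 else n % P + 1 := by
  have h1 : 1 % P = 1 := Nat.mod_eq_of_lt (by omega)
  have h0 : n % P < P := Nat.mod_lt _ (by omega)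
  rw [Nat.add_mod, h1]
  split_ifs with h
  · rw [h, Nat.mod_self]
  · exact Nat.mod_eq_of_lt (by omega)

set_option maxHeartbeats 1000000 in
lemma fs_rec (ℓ : ℕ) (hℓ : 1 ≤ ℓ) (n j : ℕ) (hj : j ≤ ℓ) :
    fs ℓ (n + 2) j =
      ((if j = 0 then 0 else fs ℓ (n + 1) (j - 1)) +
        (if j + 1 ≤ ℓ then fs ℓ (n + 1) (j + 1) else 0)) - fs ℓ n j := by
  have hP : 2 ≤ 2 * ℓ + 4 := by omega
  have h1 := mod_succ (2 * ℓ + 4) n hP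
  have h2 := mod_succ (2 * ℓ + 4) (n + 1) hP
  have h0 : n % (2 * ℓ + 4) < 2 * ℓ + 4 := Nat.mod_lt _ (by omega)
  rw [show n + 2 = (n + 1) + 1 from rfl]
  unfold fs
  generalize hA : n % (2 * ℓ + 4) = A at h0 h1 ⊢
  generalize hB : (n + 1) % (2 * ℓ + 4) = B at h1 h2 ⊢
  generalize hC : (n + 1 + 1) % (2 * ℓ + 4) = C at h2 ⊢
  split_ifs at h1 h2 ⊢ <;> omega

lemma F_char0 (ℓ : ℕ) : F ℓ (sl2char 0) = fsfun ℓ 0 := by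
  have h1 : sl2char 0 = Polynomial.monomial 0 1 := by
    rw [Polynomial.monomial_zero_one]; rfl
  rw [h1, F_monomial, one_smul]
  show Pi.single 0 1 = fsfun ℓ 0
  funext c
  rw [Pi.single_apply]
  show (if c = 0 then (1 : ℤ) else 0) = fs ℓ 0 (c : ℕ)
  unfold fs
  rw [Nat.zero_mod]
  have hcc : (c = 0) ↔ ((c : ℕ) = 0) := by
    rw [Fin.ext_iff]; simp
  split_ifs <;> simp_all <;> omega

lemma F_char1 (ℓ : ℕ) (hℓ : 1 ≤ ℓ) : F ℓ (sl2char 1) = fsfun ℓ 1 := by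
  have h1 : sl2char 1 = Polynomial.monomial 1 1 := by
    rw [Polynomial.monomial_one_one_eq_X]; rfl
  rw [h1, F_monomial, one_smul]
  show T ℓ (Pi.single 0 1) = fsfun ℓ 1
  funext c
  rw [T_apply]
  have hE : ∀ m : ℕ, E ℓ (Pi.single 0 (1 : ℤ)) m = if m = 0 then 1 else 0 := by
    intro m
    unfold E
    split_ifs with h h2 h2
    · rw [show (⟨m, h⟩ : Fin (ℓ + 1)) = 0 from Fin.ext h2, Pi.single_eq_same]
    · exact Pi.single_eq_of_ne (fun hc => h2 (by simpa [Fin.ext_iff] using hc)) 1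
    · omega
    · rfl
  rw [hE, hE]
  show _ = fs ℓ 1 (c : ℕ)
  unfold fs
  rw [Nat.mod_eq_of_lt (by omega)]
  split_ifs <;> try contradiction
  all_goals omega

lemma F_char (ℓ : ℕ) (hℓ : 1 ≤ ℓ) (n : ℕ) : F ℓ (sl2char n) = fsfun ℓ n := by
  have H : ∀ m, F ℓ (sl2char m) = fsfun ℓ m ∧ F ℓ (sl2char (m + 1)) = fsfun ℓ (m + 1) := by
    intro m
    induction m with
    | zero => exact ⟨F_char0 ℓ, F_char1 ℓ hℓ⟩
    | succ k ih =>
        refine ⟨ih.2, ?_⟩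
        have hrw : sl2char (k + 1 + 1) = Polynomial.X * sl2char (k + 1) - sl2char k := rfl
        rw [hrw, map_sub, F_X_mul, ih.1, ih.2]
        funext c
        have hc : (c : ℕ) ≤ ℓ := by have := c.isLt; omega
        show T ℓ (fsfun ℓ (k + 1)) c - fsfun ℓ k c = fsfun ℓ (k + 1 + 1) c
        rw [T_apply, E_fsfun, E_fsfun]
        show _ = fs ℓ (k + 2) (c : ℕ)
        rw [fs_rec ℓ hℓ k (c : ℕ) hc]
        have e1 : ((c : ℕ) - 1 < ℓ + 1) := by omega
        rw [if_pos e1]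
        by_cases h2 : (c : ℕ) + 1 < ℓ + 1
        · rw [if_pos h2, if_pos (show (c : ℕ) + 1 ≤ ℓ by omega)]
          rfl
        · rw [if_neg h2, if_neg (show ¬((c : ℕ) + 1 ≤ ℓ) by omega)]
          rfl
  exact (H n).1

lemma fs_single (ℓ : ℕ) (n : Fin (ℓ + 1)) : fsfun ℓ (n : ℕ) = Pi.single n 1 := by
  funext c
  rw [Pi.single_apply]
  show fs ℓ (n : ℕ) (c : ℕ) = _
  unfold fs
  rw [Nat.mod_eq_of_lt (by have := n.isLt; omega)]
  have hcc : (c = n) ↔ ((c : ℕ) = (n : ℕ)) := Fin.ext_iff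
  have hn : (n : ℕ) ≤ ℓ := by have := n.isLt; omega
  split_ifs <;> simp_all <;> omega

end KacWalton

open KacWalton in
/-- the Kac–Walton map `F` is a surjective ring homomorphism from the
representation ring `R = ℤ[x]` of `sl₂` onto the level-`ℓ` fusion ring: it sends `χ_n` to
the `n`-th basis vector for `n ≤ ℓ`, kills `χ_{ℓ+1}`, satisfies the affine-Weyl
reflection rule `F(χ_n) = −F(χ_{2ℓ+2−n})` and periodicity `F(χ_{n+2(ℓ+2)}) = F(χ_n)`,
and intertwines the polynomial product with the fusion product whose structure constants
are the `N_{ab}^c`. -/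
theorem kac_walton_epimorphism (ℓ : ℕ) (hℓ : 1 ≤ ℓ) :
    ∃ F : Polynomial ℤ →ₗ[ℤ] (Fin (ℓ + 1) → ℤ),
      (∀ n : Fin (ℓ + 1), F (sl2char n) = Pi.single n 1) ∧
      F (sl2char (ℓ + 1)) = 0 ∧
      (∀ n : ℕ, n ≤ 2 * ℓ + 2 → F (sl2char n) = - F (sl2char (2 * ℓ + 2 - n))) ∧
      (∀ n : ℕ, F (sl2char (n + 2 * (ℓ + 2))) = F (sl2char n)) ∧
      (∀ p q : Polynomial ℤ, F (p * q) = fusMul ℓ (F p) (F q)) ∧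
      Function.Surjective F := by
  refine ⟨KacWalton.F ℓ, ?_, ?_, ?_, ?_, F_mul ℓ, ?_⟩
  · intro n
    rw [F_char ℓ hℓ, fs_single]
  · rw [F_char ℓ hℓ]
    funext c
    show fs ℓ (ℓ + 1) (c : ℕ) = 0
    unfold fs
    rw [Nat.mod_eq_of_lt (by omega)]
    split_ifs <;> omega
  · intro n hn
    rw [F_char ℓ hℓ, F_char ℓ hℓ]
    funext c
    have hc : (c : ℕ) ≤ ℓ := by have := c.isLt; omega
    show fs ℓ n (c : ℕ) = -(fs ℓ (2 * ℓ + 2 - n) (c : ℕ))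
    unfold fs
    rw [Nat.mod_eq_of_lt (show n < 2 * ℓ + 4 by omega),
      Nat.mod_eq_of_lt (show 2 * ℓ + 2 - n < 2 * ℓ + 4 by omega)]
    split_ifs <;> omega
  · intro n
    rw [F_char ℓ hℓ, F_char ℓ hℓ]
    funext c
    show fs ℓ (n + 2 * (ℓ + 2)) (c : ℕ) = fs ℓ n (c : ℕ)
    unfold fs
    rw [show n + 2 * (ℓ + 2) = n + (2 * ℓ + 4) from by ring, Nat.add_mod_right]
  · intro v
    refine ⟨∑ n : Fin (ℓ + 1), v n • sl2char (n : ℕ), ?_⟩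
    rw [map_sum]
    funext c
    rw [Finset.sum_apply]
    have : ∀ n : Fin (ℓ + 1), (KacWalton.F ℓ (v n • sl2char (n : ℕ))) c
        = if c = n then v n else 0 := by
      intro n
      rw [map_smul, F_char ℓ hℓ, fs_single]
      simp [Pi.single_apply]
    rw [Finset.sum_congr rfl fun n _ => this n, Finset.sum_ite_eq]
    simp
end
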